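/- arXiv:2001.02288 — 4 statements merged into one kernel-verified Lean document; each statement's English description precedes it below -/
import Mathlib

section
/- Let k be an algebraically closed field and let A be a finite-dimensional commutative Frobenius algebra over k, with comultiplication Δ : A → A ⊗[k] A, counit ε : A → k and multiplication m : A ⊗[k] A → A. Then A is a semisimple ring if and only if the window endomorphism m ∘ Δ : A → A is bijective. -/
/-!
The Frobenius relation evaluated at `x ⊗ 1` gives `Δ x = (x ⊗ 1) • Δ 1`, so the window
endomorphism is multiplication by `w = m (Δ 1)`. The counit law makes `Δ 1` a copairing dual to
the form `(a, b) ↦ ε (a * b)`, whence `tr (x * ·) = ε (x * w)`.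

If `A` is semisimple and `w` lies in a maximal ideal `M`, multiplication by the idempotent `e`
cutting out the one-dimensional complement `A ⧸ M ≅ k` has trace `1`, yet `ε (e * w) = 0`.
Conversely, if `w` is a unit and `x` is nilpotent, then `ε (a * x * w) = tr (a * x * ·) = 0` for
all `a`, so `x = 0`; a reduced Artinian ring is semisimple.
-/

open TensorProduct

section FrobeniusRelation

variable {R A : Type*} [CommSemiring R] [CommSemiring A] [Algebra R A]

theorem lTensor_mul'_assoc_tmul_one (t : A ⊗[R] A) :
    LinearMap.lTensor A (LinearMap.mul' R A) (TensorProduct.assoc R A A A (t ⊗ₜ 1)) = t := by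
  induction t using TensorProduct.induction_on with
  | zero => simp
  | tmul a b => simp
  | add x y hx hy => simp only [add_tmul, map_add, hx, hy]

theorem rTensor_mul'_assoc_symm_tmul (x : A) (t : A ⊗[R] A) :
    LinearMap.rTensor A (LinearMap.mul' R A) ((TensorProduct.assoc R A A A).symm (x ⊗ₜ t)) =
      LinearMap.rTensor A (LinearMap.mulLeft R x) t := by
  induction t using TensorProduct.induction_on with
  | zero => simp
  | tmul a b => simp
  | add u v hu hv => simp only [tmul_add, map_add, hu, hv]

theorem mul'_comp_rTensor_mulLeft (x : A) :
    LinearMap.mul' R A ∘ₗ LinearMap.rTensor A (LinearMap.mulLeft R x) =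
      LinearMap.mulLeft R x ∘ₗ LinearMap.mul' R A := by
  ext a b
  simp [mul_assoc]

theorem mul'_comp_lTensor_mulLeft (x : A) :
    LinearMap.mul' R A ∘ₗ LinearMap.lTensor A (LinearMap.mulLeft R x) =
      LinearMap.mulLeft R x ∘ₗ LinearMap.mul' R A := by
  ext a b
  simp [mul_left_comm]

variable {Δ : A →ₗ[R] A ⊗[R] A}

theorem comul_eq_rTensor_mulLeft_comul_one
    (hfrob : (LinearMap.lTensor A (LinearMap.mul' R A)).comp
        ((TensorProduct.assoc R A A A).toLinearMap.comp (LinearMap.rTensor A Δ))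
      = (LinearMap.rTensor A (LinearMap.mul' R A)).comp
        ((TensorProduct.assoc R A A A).symm.toLinearMap.comp (LinearMap.lTensor A Δ)))
    (x : A) : Δ x = LinearMap.rTensor A (LinearMap.mulLeft R x) (Δ 1) := by
  simpa [lTensor_mul'_assoc_tmul_one, rTensor_mul'_assoc_symm_tmul] using
    LinearMap.congr_fun hfrob (x ⊗ₜ 1)

theorem mul'_comp_comul_eq_mulLeft
    (hfrob : (LinearMap.lTensor A (LinearMap.mul' R A)).comp
        ((TensorProduct.assoc R A A A).toLinearMap.comp (LinearMap.rTensor A Δ))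
      = (LinearMap.rTensor A (LinearMap.mul' R A)).comp
        ((TensorProduct.assoc R A A A).symm.toLinearMap.comp (LinearMap.lTensor A Δ))) :
    LinearMap.mul' R A ∘ₗ Δ = LinearMap.mulLeft R (LinearMap.mul' R A (Δ 1)) := by
  ext x
  rw [LinearMap.comp_apply, comul_eq_rTensor_mulLeft_comul_one hfrob, ← LinearMap.comp_apply,
    mul'_comp_rTensor_mulLeft, LinearMap.comp_apply, LinearMap.mulLeft_apply,
    LinearMap.mulLeft_apply, mul_comm]

end FrobeniusRelation

section Copairing

variable {k A : Type*} [Field k] [CommRing A] [Algebra k A] (ε : A →ₗ[k] k)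

/-- `copairingEnd ε t = id` says that `t` is a copairing dual to the form `(a, b) ↦ ε (a * b)`. -/
def copairingEnd : A ⊗[k] A →ₗ[k] Module.End k A :=
  dualTensorHom k A A ∘ₗ LinearMap.rTensor A (LinearMap.llcomp k A A k ε ∘ₗ LinearMap.mul k A)

@[simp]
theorem copairingEnd_tmul_apply (b c x : A) : copairingEnd ε (b ⊗ₜ c) x = ε (b * x) • c := by
  simp [copairingEnd, dualTensorHom_apply]

theorem copairingEnd_apply (t : A ⊗[k] A) (x : A) :
    copairingEnd ε t x =
      TensorProduct.lid k A (LinearMap.rTensor A (ε ∘ₗ LinearMap.mulLeft k x) t) := by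
  induction t using TensorProduct.induction_on with
  | zero => simp
  | tmul b c => simp [mul_comm]
  | add u v hu hv => simp [hu, hv]

theorem trace_comp_copairingEnd [FiniteDimensional k A] (φ : Module.End k A) (t : A ⊗[k] A) :
    LinearMap.trace k A (φ ∘ₗ copairingEnd ε t) =
      ε (LinearMap.mul' k A (LinearMap.lTensor A φ t)) := by
  induction t using TensorProduct.induction_on with
  | zero => simp
  | tmul b c =>
    have hrank_one : φ ∘ₗ copairingEnd ε (b ⊗ₜ c) =
        dualTensorHom k A A ((ε ∘ₗ LinearMap.mulLeft k b) ⊗ₜ φ c) := by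
      ext x
      simp [dualTensorHom_apply]
    rw [hrank_one, LinearMap.trace_eq_contract_apply, contractLeft_apply]
    simp
  | add u v hu hv => simp only [map_add, LinearMap.comp_add, hu, hv]

variable {ε} {t : A ⊗[k] A}

theorem trace_mulLeft_eq_of_copairingEnd_eq_id [FiniteDimensional k A]
    (ht : copairingEnd ε t = LinearMap.id) (x : A) :
    LinearMap.trace k A (LinearMap.mulLeft k x) = ε (x * LinearMap.mul' k A t) := by
  rw [← LinearMap.comp_id (LinearMap.mulLeft k x), ← ht, trace_comp_copairingEnd]
  exact congrArg ε (LinearMap.congr_fun (mul'_comp_lTensor_mulLeft x) t)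

theorem eq_zero_of_copairingEnd_eq_id (ht : copairingEnd ε t = LinearMap.id) {x : A}
    (hx : ∀ a, ε (a * x) = 0) : x = 0 := by
  have hvanish : ∀ s : A ⊗[k] A, copairingEnd ε s x = 0 := by
    intro s
    induction s using TensorProduct.induction_on with
    | zero => simp
    | tmul b c => simp [hx]
    | add u v hu hv => simp [hu, hv]
  simpa [ht] using hvanish t

theorem copairingEnd_comul_one {Δ : A →ₗ[k] A ⊗[k] A}
    (hcounit_left : (TensorProduct.lid k A).toLinearMap.comp
        ((LinearMap.rTensor A ε).comp Δ) = LinearMap.id)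
    (hfrob : (LinearMap.lTensor A (LinearMap.mul' k A)).comp
        ((TensorProduct.assoc k A A A).toLinearMap.comp (LinearMap.rTensor A Δ))
      = (LinearMap.rTensor A (LinearMap.mul' k A)).comp
        ((TensorProduct.assoc k A A A).symm.toLinearMap.comp (LinearMap.lTensor A Δ))) :
    copairingEnd ε (Δ 1) = LinearMap.id := by
  ext a
  rw [copairingEnd_apply, LinearMap.rTensor_comp_apply,
    ← comul_eq_rTensor_mulLeft_comul_one hfrob]
  exact LinearMap.congr_fun hcounit_left a

end Copairing

section TraceForm

variable {k A : Type*} [Field k] [CommRing A] [Algebra k A]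

theorem finrank_quotient_eq_one_of_isMaximal [IsAlgClosed k] [FiniteDimensional k A]
    (M : Ideal A) [M.IsMaximal] : Module.finrank k (A ⧸ M) = 1 := by
  let := Ideal.Quotient.field M
  have hbij : Function.Bijective (Algebra.linearMap k (A ⧸ M)) :=
    ⟨(algebraMap k (A ⧸ M)).injective, IsAlgClosed.algebraMap_bijective_of_isIntegral.2⟩
  rw [← (LinearEquiv.ofBijective _ hbij).finrank_eq, Module.finrank_self]

theorem exists_mul_eq_zero_trace_mulLeft_eq_one [IsAlgClosed k] [FiniteDimensional k A]
    [IsSemisimpleRing A] (M : Ideal A) [M.IsMaximal] :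
    ∃ e : A, (∀ m ∈ M, e * m = 0) ∧ LinearMap.trace k A (LinearMap.mulLeft k e) = 1 := by
  obtain ⟨J, hMJ⟩ := exists_isCompl (M : Submodule A A)
  have hmul : ∀ m ∈ M, ∀ j ∈ J, m * j = 0 := fun m hm j hj ↦
    (Submodule.disjoint_def.mp hMJ.disjoint) _ (M.mul_mem_right j hm) (J.smul_mem m hj)
  obtain ⟨x, hx, e, he, hxe⟩ :=
    Submodule.mem_sup.mp (hMJ.sup_eq_top ▸ Submodule.mem_top (x := 1))
  have hproj : LinearMap.IsProj (J.restrictScalars k) (LinearMap.mulLeft k e) := by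
    refine ⟨fun a ↦ by simpa [mul_comm] using J.smul_mem a he, fun a ha ↦ ?_⟩
    calc e * a = (x + e) * a - x * a := by ring
      _ = a := by rw [hxe, one_mul, hmul x hx a ha, sub_zero]
  have hJ : Module.finrank k (J.restrictScalars k) = 1 := by
    have e : (A ⧸ M) ≃ₗ[k] J.restrictScalars k :=
      (Submodule.quotientEquivOfIsCompl _ _ hMJ).restrictScalars k
    rw [← e.finrank_eq, finrank_quotient_eq_one_of_isMaximal M]
  refine ⟨e, fun m hm ↦ by rw [mul_comm]; exact hmul m hm e he, ?_⟩
  rw [hproj.trace, hJ, Nat.cast_one]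

variable {ε : A →ₗ[k] k} {w : A}

theorem isUnit_of_trace_mulLeft_eq [IsAlgClosed k] [FiniteDimensional k A] [IsSemisimpleRing A]
    (htr : ∀ x, LinearMap.trace k A (LinearMap.mulLeft k x) = ε (x * w)) : IsUnit w := by
  by_contra hw
  obtain ⟨M, hM, hwM⟩ := (Ideal.span {w}).exists_le_maximal
    (by rwa [ne_eq, Ideal.span_singleton_eq_top])
  obtain ⟨e, he, htr_e⟩ := exists_mul_eq_zero_trace_mulLeft_eq_one (k := k) M
  have : (1 : k) = 0 := by
    rw [← htr_e, htr, he w (hwM (Ideal.mem_span_singleton_self w)), map_zero]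
  exact one_ne_zero this

theorem isReduced_of_trace_mulLeft_eq
    (htr : ∀ x, LinearMap.trace k A (LinearMap.mulLeft k x) = ε (x * w))
    (hε : ∀ x, (∀ a, ε (a * x) = 0) → x = 0) (hw : IsUnit w) : IsReduced A := by
  refine ⟨fun x hx ↦ ?_⟩
  have hxw : x * w = 0 := hε _ fun a ↦ by
    have hnil : IsNilpotent (LinearMap.mulLeft k (x * a)) :=
      ((Commute.all x a).isNilpotent_mul_right hx).map (Algebra.lmul k A)
    rw [← mul_assoc, mul_comm a, ← htr]
    exact (LinearMap.isNilpotent_trace_of_isNilpotent hnil).eq_zero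
  simpa using hw.mul_left_eq_zero.mp hxw

end TraceForm

theorem semisimple_iff_window_bijective_general
    {k : Type*} [Field k] [IsAlgClosed k]
    {A : Type*} [CommRing A] [Algebra k A] [FiniteDimensional k A]
    (Δ : A →ₗ[k] A ⊗[k] A) (ε : A →ₗ[k] k)
    (hcounit_left : (TensorProduct.lid k A).toLinearMap.comp
        ((LinearMap.rTensor A ε).comp Δ) = LinearMap.id)
    (hfrob : (LinearMap.lTensor A (LinearMap.mul' k A)).comp
        ((TensorProduct.assoc k A A A).toLinearMap.comp (LinearMap.rTensor A Δ))
      = (LinearMap.rTensor A (LinearMap.mul' k A)).comp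
        ((TensorProduct.assoc k A A A).symm.toLinearMap.comp (LinearMap.lTensor A Δ))) :
    IsSemisimpleRing A ↔ Function.Bijective ((LinearMap.mul' k A).comp Δ) := by
  have hcop : copairingEnd ε (Δ 1) = LinearMap.id := copairingEnd_comul_one hcounit_left hfrob
  have htr := trace_mulLeft_eq_of_copairingEnd_eq_id hcop
  rw [mul'_comp_comul_eq_mulLeft hfrob]
  refine Iff.trans ?_ IsUnit.isUnit_iff_mulLeft_bijective
  have : IsArtinianRing A := isArtinian_of_tower k inferInstance
  refine ⟨fun _ ↦ isUnit_of_trace_mulLeft_eq htr, fun hw ↦ ?_⟩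
  have : IsReduced A :=
    isReduced_of_trace_mulLeft_eq htr (fun _ ↦ eq_zero_of_copairingEnd_eq_id hcop) hw
  exact IsArtinianRing.isSemisimpleRing_of_isReduced A

/-- Let `k` be an algebraically closed field and `A` a finite-dimensional
commutative Frobenius algebra over `k` (comultiplication `Δ`, counit `ε`, multiplication
`m = LinearMap.mul' k A`).  Then `A` is a semisimple ring if and only if the window
endomorphism `m ∘ Δ : A → A` is bijective. -/
theorem semisimple_iff_window_bijective
    {k : Type*} [Field k] [IsAlgClosed k]
    {A : Type*} [CommRing A] [Algebra k A] [FiniteDimensional k A]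
    (Δ : A →ₗ[k] A ⊗[k] A) (ε : A →ₗ[k] k)
    (hcoassoc : (TensorProduct.assoc k A A A).toLinearMap.comp
        ((LinearMap.rTensor A Δ).comp Δ) = (LinearMap.lTensor A Δ).comp Δ)
    (hcounit_left : (TensorProduct.lid k A).toLinearMap.comp
        ((LinearMap.rTensor A ε).comp Δ) = LinearMap.id)
    (hcounit_right : (TensorProduct.rid k A).toLinearMap.comp
        ((LinearMap.lTensor A ε).comp Δ) = LinearMap.id)
    (hcocomm : (TensorProduct.comm k A A).toLinearMap.comp Δ = Δ)
    (hfrob : (LinearMap.lTensor A (LinearMap.mul' k A)).comp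
        ((TensorProduct.assoc k A A A).toLinearMap.comp (LinearMap.rTensor A Δ))
      = (LinearMap.rTensor A (LinearMap.mul' k A)).comp
        ((TensorProduct.assoc k A A A).symm.toLinearMap.comp (LinearMap.lTensor A Δ))) :
    IsSemisimpleRing A ↔ Function.Bijective ((LinearMap.mul' k A).comp Δ) :=
  semisimple_iff_window_bijective_general Δ ε hcounit_left hfrob
end

section
/- Let k be a field and let A be a commutative Frobenius algebra over k, with comultiplication Δ, counit ε and multiplication m. Suppose δ : A → A ⊗[k] A is a separating morphism, i.e. a k-linear map satisfying m ∘ δ = id_A and the Frobenius condition (id_A ⊗ m) ∘ (δ ⊗ id_A) = (m ⊗ id_A) ∘ (id_A ⊗ δ). Let x : A → A be the composite of δ with id_A ⊗ ε followed by the canonical isomorphism A ⊗[k] k ≅ A. Then x is a two-sided inverse of the window endomorphism: x ∘ (m ∘ Δ) = id_A and (m ∘ Δ) ∘ x = id_A. -/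
open TensorProduct

section Aux

variable {k : Type*} [Field k] {A : Type*} [CommRing A] [Algebra k A]

/-- The map `rid ∘ lTensor ε`. -/
noncomputable def Gmap (ε : A →ₗ[k] k) : A ⊗[k] A →ₗ[k] A :=
  (TensorProduct.rid k A).toLinearMap.comp (LinearMap.lTensor A ε)

lemma Gmap_tmul (ε : A →ₗ[k] k) (s t : A) : Gmap ε (s ⊗ₜ[k] t) = ε t • s := by
  simp [Gmap]

lemma Gmap_mul_left (ε : A →ₗ[k] k) (a : A) (x : A ⊗[k] A) :
    Gmap ε ((a ⊗ₜ[k] 1) * x) = a * Gmap ε x := by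
  induction x using TensorProduct.induction_on with
  | zero => simp
  | tmul s t =>
      simp [Algebra.TensorProduct.tmul_mul_tmul, Gmap_tmul, mul_smul_comm]
  | add x y hx hy => simp [mul_add, map_add, hx, hy]

lemma mul'_mul_left (a : A) (x : A ⊗[k] A) :
    LinearMap.mul' k A ((a ⊗ₜ[k] 1) * x) = a * LinearMap.mul' k A x := by
  induction x using TensorProduct.induction_on with
  | zero => simp
  | tmul s t => simp [Algebra.TensorProduct.tmul_mul_tmul, mul_assoc]
  | add x y hx hy => simp [mul_add, map_add, hx, hy]

set_option synthInstance.maxHeartbeats 1000000 in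
lemma aux_frob_pointwise (c : A →ₗ[k] A ⊗[k] A)
    (hc : (LinearMap.lTensor A (LinearMap.mul' k A)).comp
        ((TensorProduct.assoc k A A A).toLinearMap.comp (LinearMap.rTensor A c))
      = (LinearMap.rTensor A (LinearMap.mul' k A)).comp
        ((TensorProduct.assoc k A A A).symm.toLinearMap.comp (LinearMap.lTensor A c)))
    (a b : A) : c a * (1 ⊗ₜ[k] b) = (a ⊗ₜ[k] 1) * c b := by
  have h := LinearMap.congr_fun hc (a ⊗ₜ[k] b)
  simp only [LinearMap.comp_apply, LinearMap.rTensor_tmul, LinearMap.lTensor_tmul,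
    LinearEquiv.coe_coe] at h
  have hL : ∀ t : A ⊗[k] A, (LinearMap.lTensor A (LinearMap.mul' k A))
      ((TensorProduct.assoc k A A A) (t ⊗ₜ[k] b)) = t * (1 ⊗ₜ[k] b) := by
    intro t
    induction t using TensorProduct.induction_on with
    | zero => simp
    | tmul s r => simp [Algebra.TensorProduct.tmul_mul_tmul]
    | add x y hx hy => simp only [add_tmul, map_add, hx, hy, add_mul]
  have hR : ∀ t : A ⊗[k] A, (LinearMap.rTensor A (LinearMap.mul' k A))
      ((TensorProduct.assoc k A A A).symm (a ⊗ₜ[k] t)) = (a ⊗ₜ[k] 1) * t := by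
    intro t
    induction t using TensorProduct.induction_on with
    | zero => simp
    | tmul s r => simp [Algebra.TensorProduct.tmul_mul_tmul]
    | add x y hx hy => simp only [tmul_add, map_add, hx, hy, mul_add]
  rw [hL (c a), hR (c b)] at h
  exact h

/-- Key rewriting lemma: multiplying a Casimir element by `x` is the same as
multiplying by `1 ⊗ m x`. -/
lemma key_casimir (e0 : A ⊗[k] A)
    (hcas : ∀ a : A, (a ⊗ₜ[k] 1) * e0 = e0 * (1 ⊗ₜ[k] a))
    (x : A ⊗[k] A) :
    x * e0 = (1 ⊗ₜ[k] (LinearMap.mul' k A x)) * e0 := by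
  induction x using TensorProduct.induction_on with
  | zero => simp
  | tmul u v =>
      have h1 : (u ⊗ₜ[k] v : A ⊗[k] A) = (1 ⊗ₜ[k] v) * (u ⊗ₜ[k] 1) := by
        simp [Algebra.TensorProduct.tmul_mul_tmul]
      calc (u ⊗ₜ[k] v) * e0 = (1 ⊗ₜ[k] v) * ((u ⊗ₜ[k] 1) * e0) := by
            rw [h1, mul_assoc]
        _ = (1 ⊗ₜ[k] v) * (e0 * (1 ⊗ₜ[k] u)) := by rw [hcas u]
        _ = ((1 ⊗ₜ[k] v) * (1 ⊗ₜ[k] u)) * e0 := by ring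
        _ = (1 ⊗ₜ[k] (LinearMap.mul' k A (u ⊗ₜ[k] v))) * e0 := by
            simp [Algebra.TensorProduct.tmul_mul_tmul, mul_comm]
  | add x y hx hy =>
      rw [add_mul, hx, hy, map_add, ← add_mul, ← tmul_add]

end Aux

/-- Let `k` be a field and `A` a commutative Frobenius algebra over `k`.
Suppose `δ : A → A ⊗[k] A` is a separating morphism, i.e. `m ∘ δ = id` and `δ` satisfies
the Frobenius condition with `m`.  Let `x : A → A` be the composite of `δ` with `id ⊗ ε`
followed by the canonical isomorphism `A ⊗[k] k ≅ A`.  Then `x` is a two-sided inverse of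
the window endomorphism `m ∘ Δ`. -/
theorem separating_gives_window_inverse
    {k : Type*} [Field k]
    {A : Type*} [CommRing A] [Algebra k A]
    (Δ : A →ₗ[k] A ⊗[k] A) (ε : A →ₗ[k] k)
    (hcoassoc : (TensorProduct.assoc k A A A).toLinearMap.comp
        ((LinearMap.rTensor A Δ).comp Δ) = (LinearMap.lTensor A Δ).comp Δ)
    (hcounit_left : (TensorProduct.lid k A).toLinearMap.comp
        ((LinearMap.rTensor A ε).comp Δ) = LinearMap.id)
    (hcounit_right : (TensorProduct.rid k A).toLinearMap.comp
        ((LinearMap.lTensor A ε).comp Δ) = LinearMap.id)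
    (hcocomm : (TensorProduct.comm k A A).toLinearMap.comp Δ = Δ)
    (hfrob : (LinearMap.lTensor A (LinearMap.mul' k A)).comp
        ((TensorProduct.assoc k A A A).toLinearMap.comp (LinearMap.rTensor A Δ))
      = (LinearMap.rTensor A (LinearMap.mul' k A)).comp
        ((TensorProduct.assoc k A A A).symm.toLinearMap.comp (LinearMap.lTensor A Δ)))
    (δ : A →ₗ[k] A ⊗[k] A)
    (hδsec : (LinearMap.mul' k A).comp δ = LinearMap.id)
    (hδfrob : (LinearMap.lTensor A (LinearMap.mul' k A)).comp
        ((TensorProduct.assoc k A A A).toLinearMap.comp (LinearMap.rTensor A δ))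
      = (LinearMap.rTensor A (LinearMap.mul' k A)).comp
        ((TensorProduct.assoc k A A A).symm.toLinearMap.comp (LinearMap.lTensor A δ))) :
    ((TensorProduct.rid k A).toLinearMap.comp
        ((LinearMap.lTensor A ε).comp δ)).comp ((LinearMap.mul' k A).comp Δ)
      = LinearMap.id ∧
    ((LinearMap.mul' k A).comp Δ).comp ((TensorProduct.rid k A).toLinearMap.comp
        ((LinearMap.lTensor A ε).comp δ)) = LinearMap.id := by
  have hΔpt := aux_frob_pointwise Δ hfrob
  have hδpt := aux_frob_pointwise δ hδfrob
  set D : A ⊗[k] A := Δ 1 with hD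
  set d : A ⊗[k] A := δ 1 with hd
  have hone : (1 : A ⊗[k] A) = (1 : A) ⊗ₜ[k] (1 : A) := Algebra.TensorProduct.one_def
  have hΔa : ∀ a : A, Δ a = (a ⊗ₜ[k] 1) * D := by
    intro a
    have := hΔpt a 1
    rwa [← hone, mul_one] at this
  have hδa : ∀ a : A, δ a = (a ⊗ₜ[k] 1) * d := by
    intro a
    have := hδpt a 1
    rwa [← hone, mul_one] at this
  have hΔcas : ∀ a : A, (a ⊗ₜ[k] 1) * D = D * (1 ⊗ₜ[k] a) := by
    intro a
    have := hΔpt 1 a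
    rw [← hone, one_mul] at this
    exact (hΔa a).symm.trans this.symm
  have hδcas : ∀ a : A, (a ⊗ₜ[k] 1) * d = d * (1 ⊗ₜ[k] a) := by
    intro a
    have := hδpt 1 a
    rw [← hone, one_mul] at this
    exact (hδa a).symm.trans this.symm
  set e : A := LinearMap.mul' k A D with he
  set f : A := Gmap ε d with hf
  have hmd : LinearMap.mul' k A d = 1 := LinearMap.congr_fun hδsec 1
  have hGD : Gmap ε D = 1 := LinearMap.congr_fun hcounit_right 1
  -- main computation : e * f = 1
  have hef : e * f = 1 := by
    calc e * f = Gmap ε ((e ⊗ₜ[k] 1) * d) := (Gmap_mul_left ε e d).symm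
      _ = Gmap ε ((1 ⊗ₜ[k] (LinearMap.mul' k A ((e : A) ⊗ₜ[k] (1 : A)))) * d) := by
          rw [← key_casimir d hδcas]
      _ = Gmap ε ((1 ⊗ₜ[k] e) * d) := by rw [LinearMap.mul'_apply, mul_one]
      _ = Gmap ε (D * d) := by rw [he, ← key_casimir d hδcas D]
      _ = Gmap ε (d * D) := by rw [mul_comm]
      _ = Gmap ε ((1 ⊗ₜ[k] (LinearMap.mul' k A d)) * D) := by
          rw [key_casimir D hΔcas d]
      _ = Gmap ε D := by rw [hmd, ← hone, one_mul]
      _ = 1 := hGD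
  have hw : ∀ a : A, LinearMap.mul' k A (Δ a) = a * e := by
    intro a; rw [hΔa a, mul'_mul_left]
  have hx : ∀ a : A, Gmap ε (δ a) = a * f := by
    intro a; rw [hδa a, Gmap_mul_left]
  constructor
  · ext a
    show Gmap ε (δ (LinearMap.mul' k A (Δ a))) = a
    rw [hx, hw, mul_assoc, hef, mul_one]
  · ext a
    show LinearMap.mul' k A (Δ (Gmap ε (δ a))) = a
    rw [hx, hw, mul_assoc, mul_comm f e, hef, mul_one]
end

section
/- Let k be a field and let A be a commutative Frobenius algebra over k, with comultiplication Δ, counit ε and multiplication m. Suppose f : A → A is a k-linear map that is a two-sided inverse of the window endomorphism, i.e. f ∘ (m ∘ Δ) = id_A and (m ∘ Δ) ∘ f = id_A. Then δ := Δ ∘ f : A → A ⊗[k] A is a separating morphism: m ∘ δ = id_A and the Frobenius condition (id_A ⊗ m) ∘ (δ ⊗ id_A) = (m ⊗ id_A) ∘ (id_A ⊗ δ) holds. -/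
open TensorProduct

/-- Let `k` be a field and `A` a commutative Frobenius algebra over `k`.
If `f : A → A` is a `k`-linear two-sided inverse of the window endomorphism `m ∘ Δ`, then
`δ := Δ ∘ f` is a separating morphism: `m ∘ δ = id` and `δ` satisfies the Frobenius
condition with `m`. -/
theorem window_inverse_gives_separating
    {k : Type*} [Field k]
    {A : Type*} [CommRing A] [Algebra k A]
    (Δ : A →ₗ[k] A ⊗[k] A) (ε : A →ₗ[k] k)
    (hcoassoc : (TensorProduct.assoc k A A A).toLinearMap.comp
        ((LinearMap.rTensor A Δ).comp Δ) = (LinearMap.lTensor A Δ).comp Δ)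
    (hcounit_left : (TensorProduct.lid k A).toLinearMap.comp
        ((LinearMap.rTensor A ε).comp Δ) = LinearMap.id)
    (hcounit_right : (TensorProduct.rid k A).toLinearMap.comp
        ((LinearMap.lTensor A ε).comp Δ) = LinearMap.id)
    (hcocomm : (TensorProduct.comm k A A).toLinearMap.comp Δ = Δ)
    (hfrob : (LinearMap.lTensor A (LinearMap.mul' k A)).comp
        ((TensorProduct.assoc k A A A).toLinearMap.comp (LinearMap.rTensor A Δ))
      = (LinearMap.rTensor A (LinearMap.mul' k A)).comp
        ((TensorProduct.assoc k A A A).symm.toLinearMap.comp (LinearMap.lTensor A Δ)))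
    (f : A →ₗ[k] A)
    (hf_left : f.comp ((LinearMap.mul' k A).comp Δ) = LinearMap.id)
    (hf_right : ((LinearMap.mul' k A).comp Δ).comp f = LinearMap.id) :
    (LinearMap.mul' k A).comp (Δ.comp f) = LinearMap.id ∧
    (LinearMap.lTensor A (LinearMap.mul' k A)).comp
        ((TensorProduct.assoc k A A A).toLinearMap.comp (LinearMap.rTensor A (Δ.comp f)))
      = (LinearMap.rTensor A (LinearMap.mul' k A)).comp
        ((TensorProduct.assoc k A A A).symm.toLinearMap.comp
          (LinearMap.lTensor A (Δ.comp f))) := by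
  set m : A ⊗[k] A →ₗ[k] A := LinearMap.mul' k A with hm
  -- left side of the Frobenius condition, pointwise
  have lemL : ∀ (x : A ⊗[k] A) (b : A),
      (LinearMap.lTensor A m) ((TensorProduct.assoc k A A A) (x ⊗ₜ[k] b))
        = x * ((1 : A) ⊗ₜ[k] b) := by
    intro x b
    induction x using TensorProduct.induction_on with
    | zero => simp only [zero_tmul, LinearEquiv.map_zero, LinearMap.map_zero, zero_mul]
    | tmul a c =>
        simp [hm, Algebra.TensorProduct.tmul_mul_tmul, LinearMap.mul'_apply]
    | add u v hu hv =>
        simp only [add_tmul, map_add, hu, hv, add_mul]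
  -- right side of the Frobenius condition, pointwise
  have lemR : ∀ (a : A) (y : A ⊗[k] A),
      (LinearMap.rTensor A m) ((TensorProduct.assoc k A A A).symm (a ⊗ₜ[k] y))
        = (a ⊗ₜ[k] (1 : A)) * y := by
    intro a y
    induction y using TensorProduct.induction_on with
    | zero => simp only [tmul_zero, LinearEquiv.map_zero, LinearMap.map_zero, mul_zero]
    | tmul b c =>
        simp [hm, Algebra.TensorProduct.tmul_mul_tmul, LinearMap.mul'_apply]
    | add u v hu hv =>
        simp only [tmul_add, map_add, hu, hv, mul_add]
  -- the Frobenius condition, pointwise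
  have hF : ∀ a b : A, Δ a * ((1 : A) ⊗ₜ[k] b) = (a ⊗ₜ[k] (1 : A)) * Δ b := by
    intro a b
    have h := LinearMap.congr_fun hfrob (a ⊗ₜ[k] b)
    simp only [LinearMap.comp_apply, LinearMap.rTensor_tmul, LinearMap.lTensor_tmul,
      LinearEquiv.coe_coe, LinearMap.id_coe, id_eq] at h
    rw [lemL, lemR] at h
    exact h
  set e : A ⊗[k] A := Δ 1 with he
  have hΔ1 : ∀ a : A, Δ a = (a ⊗ₜ[k] (1 : A)) * e := by
    intro a
    have h := hF a 1
    rwa [← Algebra.TensorProduct.one_def, mul_one] at h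
  have hΔ2 : ∀ b : A, Δ b = e * ((1 : A) ⊗ₜ[k] b) := by
    intro b
    have h := hF 1 b
    rw [← Algebra.TensorProduct.one_def, one_mul] at h
    exact h.symm
  -- multiplying out: m (u * (1 ⊗ x)) = m u * x
  have hmul : ∀ (u : A ⊗[k] A) (x : A), m (u * ((1 : A) ⊗ₜ[k] x)) = m u * x := by
    intro u x
    induction u using TensorProduct.induction_on with
    | zero => simp
    | tmul a c =>
        simp [hm, Algebra.TensorProduct.tmul_mul_tmul, LinearMap.mul'_apply, mul_assoc]
    | add u v hu hv =>
        simp only [add_mul, map_add, hu, hv]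
  set z : A := m e with hz
  have hw : ∀ x : A, m (Δ x) = z * x := by
    intro x
    rw [hΔ2 x, hmul]
  have hfz : ∀ x : A, f (z * x) = x := by
    intro x
    have h := LinearMap.congr_fun hf_left x
    simp only [LinearMap.comp_apply, LinearMap.id_coe, id_eq] at h
    rwa [hw] at h
  have hzf : ∀ x : A, z * f x = x := by
    intro x
    have h := LinearMap.congr_fun hf_right x
    simp only [LinearMap.comp_apply, LinearMap.id_coe, id_eq] at h
    rwa [hw] at h
  have q : ∀ a b : A, f a * b = a * f b := by
    intro a b
    have h1 : z * (f a * b) = z * (a * f b) := by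
      rw [← mul_assoc, hzf, mul_comm a (f b), ← mul_assoc, hzf, mul_comm]
    have h2 := congrArg f h1
    rwa [hfz, hfz] at h2
  constructor
  · ext x
    simp only [LinearMap.comp_apply, LinearMap.id_coe, id_eq]
    rw [hw, hzf]
  · apply TensorProduct.ext'
    intro a b
    simp only [LinearMap.comp_apply, LinearMap.rTensor_tmul, LinearMap.lTensor_tmul,
      LinearEquiv.coe_coe]
    rw [lemL, lemR, hΔ2 (f a), hΔ1 (f b), mul_assoc,
      Algebra.TensorProduct.tmul_mul_tmul, one_mul, ← hΔ2,
      ← mul_assoc, Algebra.TensorProduct.tmul_mul_tmul, one_mul, ← hΔ1, q]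
end

section
/- Every finite-dimensional C*-algebra is semisimple: if A is a C*-algebra over ℂ (a complete normed star ℂ-algebra satisfying the C*-identity ‖a⋆ * a‖ = ‖a‖²) which is finite-dimensional as a ℂ-vector space, then A is a semisimple ring. -/
/-! The Jacobson radical of an Artinian ring is nilpotent, so for every `a` in it the
self-adjoint element `a⋆ * a`, which lies in the same left ideal, is nilpotent. In a C*-ring
the C*-identity gives `‖x ^ 2 ^ n‖ = ‖x‖ ^ 2 ^ n` for self-adjoint `x`, so a self-adjoint
nilpotent element vanishes, and then `‖a‖² = ‖a⋆ * a‖ = 0`. Hence the Jacobson radical is zero,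
which for an Artinian ring means semisimplicity. -/

section CStarRing

variable {E : Type*} [NormedRing E] [StarRing E] [CStarRing E]

theorem IsSelfAdjoint.eq_zero_of_isNilpotent {x : E} (hx : IsSelfAdjoint x)
    (hnil : IsNilpotent x) : x = 0 := by
  obtain ⟨n, hn⟩ := hnil
  have hpow : x ^ 2 ^ n = 0 := pow_eq_zero_of_le n.lt_two_pow_self.le hn
  have hnorm : ‖x‖ ^ 2 ^ n = 0 := by rw [← hx.norm_pow_two_pow, hpow, norm_zero]
  exact norm_eq_zero.mp (eq_zero_of_pow_eq_zero hnorm)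

theorem CStarRing.ideal_eq_bot_of_isNilpotent {I : Ideal E} (hI : IsNilpotent I) : I = ⊥ := by
  obtain ⟨n, hn⟩ := hI
  refine eq_bot_iff.mpr fun a ha ↦ ?_
  have hmem : star a * a ∈ I := I.mul_mem_left _ ha
  have hnil : IsNilpotent (star a * a) :=
    ⟨n, by simpa [hn] using Ideal.pow_mem_pow hmem n⟩
  exact (star_mul_self_eq_zero_iff a).mp
    ((IsSelfAdjoint.star_mul_self a).eq_zero_of_isNilpotent hnil)

theorem CStarRing.isSemisimpleRing_of_isArtinianRing [IsArtinianRing E] : IsSemisimpleRing E :=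
  IsArtinianRing.isSemisimpleRing_iff_jacobson.mpr
    (ideal_eq_bot_of_isNilpotent IsSemiprimaryRing.isNilpotent)

end CStarRing

/-- Every finite-dimensional C*-algebra is semisimple: if `A` is a
C*-algebra over `ℂ` which is finite-dimensional as a `ℂ`-vector space, then `A` is a
semisimple ring. -/
theorem cstar_finiteDimensional_semisimple
    (A : Type*) [CStarAlgebra A] [FiniteDimensional ℂ A] :
    IsSemisimpleRing A := by
  have : IsArtinianRing A := IsArtinianRing.of_finite ℂ A
  exact CStarRing.isSemisimpleRing_of_isArtinianRing
end
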